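/- arXiv:2011.11608 — 3 statements merged into one kernel-verified Lean document; each statement's English description precedes it below -/
import Mathlib

section
/- Let M, N be coprime positive integers and s an integer. The set {2Mn - (2Nm + s) : 0 ≤ n ≤ N-1, 0 ≤ m ≤ M-1} has exactly MN distinct elements. -/
theorem exsca_cross_diff_card (M N : ℕ) (s : ℤ) (hM : 0 < M) (hN : 0 < N)
    (hcop : Nat.Coprime M N) :
    ((Finset.range N ×ˢ Finset.range M).image
      (fun p => 2 * (M : ℤ) * p.1 - (2 * (N : ℤ) * p.2 + s))).card = M * N := by
  rw [Finset.card_image_of_injOn, Finset.card_product, Finset.card_range,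
    Finset.card_range, Nat.mul_comm]
  rintro ⟨n, m⟩ hp ⟨n', m'⟩ hp' h
  simp only [Finset.coe_product, Set.mem_prod, Finset.mem_coe, Finset.mem_range] at hp hp'
  have h : 2 * (M : ℤ) * n - (2 * N * m + s) = 2 * M * n' - (2 * N * m' + s) := h
  have key : (M : ℤ) * ((n : ℤ) - n') = (N : ℤ) * ((m : ℤ) - m') := by ring_nf; linarith
  have hdvd : (N : ℤ) ∣ ((n : ℤ) - n') := by
    have : (N : ℤ) ∣ (M : ℤ) * ((n : ℤ) - n') := ⟨(m : ℤ) - m', key⟩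
    have hc : IsCoprime (N : ℤ) (M : ℤ) :=
      Int.isCoprime_iff_gcd_eq_one.mpr (by simpa using Nat.coprime_comm.mp hcop)
    exact hc.dvd_of_dvd_mul_left this
  have hn : (n : ℤ) = n' := by
    rcases hdvd with ⟨k, hk⟩
    have h1 : (n : ℤ) < N := by exact_mod_cast hp.1
    have h2 : (n' : ℤ) < N := by exact_mod_cast hp'.1
    have hN' : (0 : ℤ) < N := by exact_mod_cast hN
    have hk0 : k = 0 := by nlinarith [Int.natCast_nonneg n, Int.natCast_nonneg n']
    rw [hk0, mul_zero] at hk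
    omega
  have hm : (m : ℤ) = m' := by
    have hM' : (0 : ℤ) < M := by exact_mod_cast hM
    nlinarith [key]
  exact Prod.ext (by exact_mod_cast hn) (by exact_mod_cast hm)
end

section
/- Let M, N be coprime positive integers and s an odd integer. Then the combined set L = L_C ∪ L_S, where L_C = {±(2Mn - (2Nm + s))} and L_S = {±2Mn : 0 ≤ n ≤ N-1} ∪ {±2Nm : 0 ≤ m ≤ M-1}, has exactly (2MN - |L_p|) + (2(M+N-1) - 1) elements, with L_p = {x ∈ L⁺_C : -x ∈ L⁺_C}. -/
open Finset

theorem exsca_combined_card (M N : ℕ) (s : ℤ) (hM : 0 < M) (hN : 0 < N)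
    (hcop : Nat.Coprime M N) (hs : Odd s) :
    let Lcp : Finset ℤ := (Finset.range N ×ˢ Finset.range M).image
      (fun p => 2 * (M : ℤ) * p.1 - (2 * (N : ℤ) * p.2 + s))
    let LC : Finset ℤ := Lcp ∪ Lcp.image (fun x => -x)
    let LS : Finset ℤ :=
      (Finset.range N).image (fun n : ℕ => 2 * (M : ℤ) * n) ∪
      (Finset.range N).image (fun n : ℕ => -(2 * (M : ℤ) * n)) ∪
      (Finset.range M).image (fun m : ℕ => 2 * (N : ℤ) * m) ∪
      (Finset.range M).image (fun m : ℕ => -(2 * (N : ℤ) * m))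
    let Lp : Finset ℤ := Lcp.filter (fun x => -x ∈ Lcp)
    (LC ∪ LS).card = (2 * M * N - Lp.card) + (2 * (M + N - 1) - 1) := by
  intro Lcp LC LS Lp
  have hcopZ : IsCoprime (M:ℤ) (N:ℤ) := Nat.isCoprime_iff_coprime.mpr hcop
  have hcopZ' : IsCoprime (N:ℤ) (M:ℤ) := hcopZ.symm
  -- all elements of Lcp are odd
  have hodd : ∀ x ∈ Lcp, Odd x := by
    intro x hx
    simp only [Lcp, mem_image, mem_product, mem_range] at hx
    obtain ⟨⟨n, m⟩, _, rfl⟩ := hx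
    obtain ⟨k, hk⟩ := hs
    exact ⟨(M:ℤ)*n - (N:ℤ)*m - k - 1, by rw [hk]; ring⟩
  have hoddLC : ∀ x ∈ LC, Odd x := by
    intro x hx
    simp only [LC, mem_union, mem_image] at hx
    rcases hx with h | ⟨y, hy, rfl⟩
    · exact hodd x h
    · exact (hodd y hy).neg
  have hevenLS : ∀ x ∈ LS, Even x := by
    intro x hx
    simp only [LS, mem_union, mem_image, mem_range] at hx
    rcases hx with (((⟨n, _, rfl⟩ | ⟨n, _, rfl⟩) | ⟨m, _, rfl⟩) | ⟨m, _, rfl⟩)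
    · exact ⟨(M:ℤ)*n, by ring⟩
    · exact ⟨-((M:ℤ)*n), by ring⟩
    · exact ⟨(N:ℤ)*m, by ring⟩
    · exact ⟨-((N:ℤ)*m), by ring⟩
  have hdisj : Disjoint LC LS := by
    rw [Finset.disjoint_left]
    intro x hx hx'
    exact (Int.not_odd_iff_even.mpr (hevenLS x hx')) (hoddLC x hx)
  -- card of Lcp
  have hLcp_card : Lcp.card = M * N := by
    have : Lcp.card = (Finset.range N ×ˢ Finset.range M).card := by
      apply card_image_of_injOn
      rintro ⟨a, b⟩ hab ⟨c, d⟩ hcd h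
      simp only [coe_product, Set.mem_prod, mem_coe, mem_range] at hab hcd
      have h' : 2 * (M:ℤ) * a - (2 * (N:ℤ) * b + s) = 2 * (M:ℤ) * c - (2 * (N:ℤ) * d + s) := h
      have h1 : (M:ℤ) * ((a:ℤ) - c) = (N:ℤ) * ((b:ℤ) - d) := by linarith
      have h2 : (N:ℤ) ∣ (M:ℤ) * ((a:ℤ) - c) := ⟨(b:ℤ) - d, h1⟩
      have h3 : (N:ℤ) ∣ ((a:ℤ) - c) := hcopZ'.dvd_of_dvd_mul_left h2
      have h4 : (a:ℤ) - c = 0 := by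
        apply Int.eq_zero_of_abs_lt_dvd h3
        have ha : (a:ℤ) < N := by exact_mod_cast hab.1
        have hc : (c:ℤ) < N := by exact_mod_cast hcd.1
        have ha' : (0:ℤ) ≤ a := Int.natCast_nonneg a
        have hc' : (0:ℤ) ≤ c := Int.natCast_nonneg c
        rw [abs_lt]; constructor <;> linarith
      have hac : a = c := by exact_mod_cast sub_eq_zero.mp h4
      have hbd : b = d := by
        have : (N:ℤ) * ((b:ℤ) - d) = 0 := by rw [← h1, h4]; ring
        have hN0 : (N:ℤ) ≠ 0 := by positivity
        have := mul_eq_zero.mp this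
        rcases this with h | h
        · exact absurd h hN0
        · exact_mod_cast sub_eq_zero.mp h
      simp [hac, hbd]
    rw [this, card_product, card_range, card_range, Nat.mul_comm]
  -- card of LC
  have hinter : Lcp ∩ Lcp.image (fun x => -x) = Lp := by
    ext x
    simp only [Lp, mem_inter, mem_filter, mem_image]
    constructor
    · rintro ⟨h1, y, hy, rfl⟩
      exact ⟨h1, by simpa using hy⟩
    · rintro ⟨h1, h2⟩
      exact ⟨h1, -x, h2, by ring⟩
  have hLC_card : LC.card + Lp.card = M * N + M * N := by
    have := Finset.card_union_add_card_inter Lcp (Lcp.image (fun x => -x))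
    rw [hinter, card_image_of_injective _ neg_injective, hLcp_card] at this
    exact this
  have hLp_le : Lp.card ≤ M * N := by
    calc Lp.card ≤ Lcp.card := card_le_card (filter_subset _ _)
    _ = M * N := hLcp_card
  -- card of LS
  have h2M : (2 * (M:ℤ)) ≠ 0 := by positivity
  have h2N : (2 * (N:ℤ)) ≠ 0 := by positivity
  set X1 : Finset ℤ := (Finset.range N).image (fun n : ℕ => 2 * (M : ℤ) * n) with hX1
  set X2 : Finset ℤ := (Finset.range N).image (fun n : ℕ => -(2 * (M : ℤ) * n)) with hX2
  set X3 : Finset ℤ := (Finset.range M).image (fun m : ℕ => 2 * (N : ℤ) * m) with hX3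
  set X4 : Finset ℤ := (Finset.range M).image (fun m : ℕ => -(2 * (N : ℤ) * m)) with hX4
  have hinjM : ∀ a ∈ Finset.range N, ∀ b ∈ Finset.range N,
      (2 * (M:ℤ) * a = 2 * (M:ℤ) * b) → a = b := by
    intro a _ b _ h
    have : (a:ℤ) = b := mul_left_cancel₀ h2M h
    exact_mod_cast this
  have hinjN : ∀ a ∈ Finset.range M, ∀ b ∈ Finset.range M,
      (2 * (N:ℤ) * a = 2 * (N:ℤ) * b) → a = b := by
    intro a _ b _ h
    have : (a:ℤ) = b := mul_left_cancel₀ h2N h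
    exact_mod_cast this
  have hc1 : X1.card = N := by
    rw [hX1, card_image_of_injOn hinjM, card_range]
  have hc2 : X2.card = N := by
    rw [hX2, card_image_of_injOn (fun a ha b hb h => hinjM a ha b hb (neg_injective h)),
      card_range]
  have hc3 : X3.card = M := by
    rw [hX3, card_image_of_injOn hinjN, card_range]
  have hc4 : X4.card = M := by
    rw [hX4, card_image_of_injOn (fun a ha b hb h => hinjN a ha b hb (neg_injective h)),
      card_range]
  have h0mem : ∀ (K : ℕ) (c : ℤ), 0 < K → (0:ℤ) ∈ (Finset.range K).image (fun n : ℕ => c * n) := by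
    intro K c hK
    simp only [mem_image, mem_range]
    exact ⟨0, hK, by ring⟩
  have h01 : (0:ℤ) ∈ X1 := h0mem N _ hN
  have h02 : (0:ℤ) ∈ X2 := by
    rw [hX2]; simp only [mem_image, mem_range]; exact ⟨0, hN, by ring⟩
  have h03 : (0:ℤ) ∈ X3 := h0mem M _ hM
  have h04 : (0:ℤ) ∈ X4 := by
    rw [hX4]; simp only [mem_image, mem_range]; exact ⟨0, hM, by ring⟩
  -- sign facts
  have hpos1 : ∀ x ∈ X1, 0 ≤ x := by
    intro x hx; rw [hX1] at hx; simp only [mem_image, mem_range] at hx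
    obtain ⟨n, _, rfl⟩ := hx; positivity
  have hneg2 : ∀ x ∈ X2, x ≤ 0 := by
    intro x hx; rw [hX2] at hx; simp only [mem_image, mem_range] at hx
    obtain ⟨n, _, rfl⟩ := hx
    have : (0:ℤ) ≤ 2 * (M:ℤ) * n := by positivity
    linarith
  have hpos3 : ∀ x ∈ X3, 0 ≤ x := by
    intro x hx; rw [hX3] at hx; simp only [mem_image, mem_range] at hx
    obtain ⟨n, _, rfl⟩ := hx; positivity
  have hneg4 : ∀ x ∈ X4, x ≤ 0 := by
    intro x hx; rw [hX4] at hx; simp only [mem_image, mem_range] at hx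
    obtain ⟨n, _, rfl⟩ := hx
    have : (0:ℤ) ≤ 2 * (N:ℤ) * n := by positivity
    linarith
  -- cross: 2Mn = 2Nm with n < N, m < M forces n = 0
  have hcross : ∀ n m : ℕ, n < N → m < M → 2 * (M:ℤ) * n = 2 * (N:ℤ) * m → (2 * (M:ℤ) * n = 0) := by
    intro n m hn hm h
    have h1 : (M:ℤ) * n = (N:ℤ) * m := by linarith
    have h2 : (N:ℤ) ∣ (M:ℤ) * (n:ℤ) := ⟨(m:ℤ), h1⟩
    have h3 : (N:ℤ) ∣ (n:ℤ) := hcopZ'.dvd_of_dvd_mul_left h2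
    have h4 : (n:ℤ) = 0 := by
      apply Int.eq_zero_of_abs_lt_dvd h3
      have : (n:ℤ) < N := by exact_mod_cast hn
      rw [abs_of_nonneg (Int.natCast_nonneg n)]; exact this
    rw [h4]; ring
  have hi12 : X1 ∩ X2 = {0} := by
    ext x
    simp only [mem_inter, mem_singleton]
    constructor
    · rintro ⟨h1, h2⟩
      have := hpos1 x h1; have := hneg2 x h2; omega
    · rintro rfl; exact ⟨h01, h02⟩
  have hi34 : X3 ∩ X4 = {0} := by
    ext x
    simp only [mem_inter, mem_singleton]
    constructor
    · rintro ⟨h1, h2⟩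
      have := hpos3 x h1; have := hneg4 x h2; omega
    · rintro rfl; exact ⟨h03, h04⟩
  have hi13 : X1 ∩ X3 = {0} := by
    ext x
    simp only [mem_inter, mem_singleton]
    constructor
    · rintro ⟨h1, h3⟩
      rw [hX1] at h1; rw [hX3] at h3
      simp only [mem_image, mem_range] at h1 h3
      obtain ⟨n, hn, rfl⟩ := h1
      obtain ⟨m, hm, hme⟩ := h3
      exact hcross n m hn hm hme.symm
    · rintro rfl; exact ⟨h01, h03⟩
  have hi14 : X1 ∩ X4 = {0} := by
    ext x
    simp only [mem_inter, mem_singleton]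
    constructor
    · rintro ⟨h1, h2⟩
      have := hpos1 x h1; have := hneg4 x h2; omega
    · rintro rfl; exact ⟨h01, h04⟩
  have hi23 : X2 ∩ X3 = {0} := by
    ext x
    simp only [mem_inter, mem_singleton]
    constructor
    · rintro ⟨h1, h2⟩
      have := hneg2 x h1; have := hpos3 x h2; omega
    · rintro rfl; exact ⟨h02, h03⟩
  have hi24 : X2 ∩ X4 = {0} := by
    ext x
    simp only [mem_inter, mem_singleton]
    constructor
    · rintro ⟨h1, h2⟩
      rw [hX2] at h1; rw [hX4] at h2
      simp only [mem_image, mem_range] at h1 h2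
      obtain ⟨n, hn, rfl⟩ := h1
      obtain ⟨m, hm, hme⟩ := h2
      have hme' : 2 * (M:ℤ) * n = 2 * (N:ℤ) * m := by linarith [neg_injective hme]
      have := hcross n m hn hm hme'
      omega
    · rintro rfl; exact ⟨h02, h04⟩
  have hU12 : (X1 ∪ X2).card = 2 * N - 1 := by
    have := Finset.card_union_add_card_inter X1 X2
    rw [hi12, hc1, hc2, card_singleton] at this
    omega
  have hiU3 : (X1 ∪ X2) ∩ X3 = {0} := by
    rw [union_inter_distrib_right, hi13, hi23, union_self]
  have hU123 : (X1 ∪ X2 ∪ X3).card = 2 * N + M - 2 := by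
    have := Finset.card_union_add_card_inter (X1 ∪ X2) X3
    rw [hiU3, hU12, hc3, card_singleton] at this
    omega
  have hiU4 : (X1 ∪ X2 ∪ X3) ∩ X4 = {0} := by
    rw [union_inter_distrib_right, union_inter_distrib_right, hi14, hi24, hi34,
      union_self, union_self]
  have hLS_card : LS.card = 2 * N + 2 * M - 3 := by
    have := Finset.card_union_add_card_inter (X1 ∪ X2 ∪ X3) X4
    rw [hiU4, hU123, hc4, card_singleton] at this
    have hLSeq : LS = X1 ∪ X2 ∪ X3 ∪ X4 := rfl
    rw [hLSeq]
    omega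
  -- combine
  rw [Finset.card_union_of_disjoint hdisj, hLS_card]
  have h2MN : 2 * M * N = M * N + M * N := by ring
  rw [h2MN]
  obtain ⟨A, hA⟩ : ∃ A, M * N = A := ⟨_, rfl⟩
  rw [hA] at hLC_card hLp_le ⊢
  omega
end

section
/- Let M, N be coprime positive integers and s an even integer with 0 ≤ s ≤ 2N-1. Then the sub-arrays P1 = {2Mn : 0 ≤ n ≤ N-1} and P2 = {2Nm + s : 0 ≤ m ≤ M-1} intersect in exactly one element, and hence |P1 ∪ P2| = M + N - 1. -/
theorem exsca_weight_zero_even (M N : ℕ) (s : ℤ) (hM : 0 < M) (hN : 0 < N)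
    (hcop : Nat.Coprime M N) (hs : Even s) (hs0 : 0 ≤ s) (hs1 : s ≤ 2 * N - 1) :
    let P1 : Finset ℤ := (Finset.range N).image (fun n : ℕ => 2 * (M : ℤ) * n)
    let P2 : Finset ℤ := (Finset.range M).image (fun m : ℕ => 2 * (N : ℤ) * m + s)
    (P1 ∩ P2).card = 1 ∧ (P1 ∪ P2).card = M + N - 1 := by
  intro P1 P2
  haveI : NeZero N := ⟨hN.ne'⟩
  obtain ⟨t, ht⟩ := hs
  have hts : s = 2 * t := by omega
  have ht0 : 0 ≤ t := by omega
  have htN : t ≤ (N : ℤ) - 1 := by omega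
  -- the pivot
  have hu : IsUnit ((M : ZMod N)) := (ZMod.isUnit_iff_coprime M N).mpr hcop
  set n₀ : ℕ := (((M : ZMod N))⁻¹ * (t : ZMod N)).val with hn₀def
  have hn₀lt : n₀ < N := ZMod.val_lt _
  have hmod : ((M : ℤ) * n₀ - t : ℤ) % N = 0 := by
    have h1 : (((M : ℤ) * n₀ - t : ℤ) : ZMod N) = 0 := by
      push_cast
      rw [ZMod.natCast_val, ZMod.cast_id, ← mul_assoc, ZMod.mul_inv_of_unit _ hu,
        one_mul, sub_self]
    have := (ZMod.intCast_zmod_eq_zero_iff_dvd _ N).mp h1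
    omega
  -- find m₀
  obtain ⟨k, hk⟩ : ((N : ℤ)) ∣ (M : ℤ) * n₀ - t := Int.dvd_of_emod_eq_zero hmod
  have hk0 : 0 ≤ k := by nlinarith [hk, ht0, htN, Int.natCast_pos.mpr hN]
  have hkM : k < (M : ℤ) := by
    have hn : (n₀ : ℤ) ≤ (N : ℤ) - 1 := by omega
    nlinarith [hk, ht0, Int.natCast_pos.mpr hN, Int.natCast_pos.mpr hM]
  set m₀ : ℕ := k.toNat with hm₀def
  have hm₀lt : m₀ < M := by omega
  have hkey : 2 * (M : ℤ) * n₀ = 2 * (N : ℤ) * m₀ + s := by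
    have : (m₀ : ℤ) = k := Int.toNat_of_nonneg hk0
    rw [this]; linarith [hk]
  -- the intersection is {2 * M * n₀}
  have hinter : P1 ∩ P2 = {2 * (M : ℤ) * n₀} := by
    ext x
    simp only [Finset.mem_inter, Finset.mem_singleton, P1, P2, Finset.mem_image,
      Finset.mem_range]
    constructor
    · rintro ⟨⟨n, hn, rfl⟩, ⟨m, hm, hx⟩⟩
      -- show n = n₀
      have hdvd : ((N : ℤ)) ∣ (M : ℤ) * n - t := ⟨m, by linarith [hx]⟩
      have hdvd2 : ((N : ℤ)) ∣ (M : ℤ) * ((n : ℤ) - n₀) := by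
        have : (M : ℤ) * ((n : ℤ) - n₀) = ((M : ℤ) * n - t) - ((M : ℤ) * n₀ - t) := by ring
        rw [this]; exact dvd_sub hdvd ⟨k, hk⟩
      have hdvd3 : ((N : ℤ)) ∣ ((n : ℤ) - n₀) := by
        have hcop' : IsCoprime (N : ℤ) (M : ℤ) := by
          rw [Int.isCoprime_iff_gcd_eq_one]
          simpa [Nat.coprime_comm] using hcop
        exact hcop'.dvd_of_dvd_mul_left hdvd2
      obtain ⟨c, hc⟩ := hdvd3
      have : n = n₀ := by
        have h1 : (n : ℤ) < N := by exact_mod_cast hn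
        have h2 : (n₀ : ℤ) < N := by exact_mod_cast hn₀lt
        have h3 : (0 : ℤ) ≤ n := Int.natCast_nonneg n
        have h4 : (0 : ℤ) ≤ n₀ := Int.natCast_nonneg n₀
        have hNpos : (0 : ℤ) < N := by exact_mod_cast hN
        have hc0 : c = 0 := by nlinarith [hc]
        rw [hc0, mul_zero] at hc
        have : (n : ℤ) = n₀ := by linarith
        exact_mod_cast this
      rw [this]
    · rintro rfl
      exact ⟨⟨n₀, hn₀lt, rfl⟩, ⟨m₀, hm₀lt, hkey.symm⟩⟩
  have hcard1 : P1.card = N := by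
    rw [Finset.card_image_of_injective _ (fun a b h => by
      have hM2 : (2 * (M : ℤ)) ≠ 0 := by positivity
      have := mul_left_cancel₀ hM2 h
      exact_mod_cast this), Finset.card_range]
  have hcard2 : P2.card = M := by
    rw [Finset.card_image_of_injective _ (fun a b h => by
      have hN2 : (2 * (N : ℤ)) ≠ 0 := by positivity
      have h' : 2 * (N : ℤ) * a = 2 * (N : ℤ) * b := by linarith [add_right_cancel h]
      have := mul_left_cancel₀ hN2 h'
      exact_mod_cast this), Finset.card_range]
  have hci : (P1 ∩ P2).card = 1 := by rw [hinter, Finset.card_singleton]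
  refine ⟨hci, ?_⟩
  have := Finset.card_union_add_card_inter P1 P2
  omega
end
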